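/- Let D ⊂ ℂ be a bounded regular domain and p₀ ∈ ∂D. Then the Robin function satisfies Λ_D(p) → -∞ as p → p₀ within D. Equivalently, the capacity density c_D(p) = e^{-Λ_D(p)} tends to +∞ at the boundary. -/

import Mathlib

/-!
`H(·, p)` is compared, by the maximum principle, with the average of the harmonic functions
`H(·, aₖ)` over points `a₀, …, aₘ ∈ D` close to `p₀`; on `∂D` this average is the discrete
logarithmic potential `(m + 1)⁻¹ ∑ₖ log ‖ζ - aₖ‖`.

The points lie on the piece of a path in `D` that runs from near `p₀` to the sphere of radius `r`
about `p₀` inside the closed ball; a norming functional maps this piece onto an interval of length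
`≥ r / 2`, and the `aₖ` are chosen with equally spaced images. For `ζ ∉ D` far from `p₀`, every
`‖ζ - aₖ‖` is comparable with `‖ζ - p‖`. For `ζ` near `p₀` the nearest `aₖ` is at distance at
least `d = dist (piece, ∁D)` and the others at distance `≳ |k - k₀| r / m`, so Stirling's bound
gives `∑ₖ log ‖ζ - aₖ‖ ≥ log d + m (log r - C) ≥ (m + 1) (log r - C')` once `m ≥ -log d`.
Either way `log ‖ζ - p‖ ≤ C'' + (m + 1)⁻¹ ∑ₖ log ‖ζ - aₖ‖` on `∂D` for all `p` near `p₀`, hence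
`H(p, p) ≤ C'' + (m + 1)⁻¹ ∑ₖ H(p, aₖ)`, and the right-hand side tends to at most `C'' + log r`
as `p → p₀`. The maximum principle itself comes from `Δ (w + ε ‖x‖²) > 0`.
-/

open Complex Metric Filter

noncomputable section

/-- A twice continuously differentiable function is harmonic on a set if its Laplacian
vanishes there. -/
def IsHarmonicOn (f : ℂ → ℝ) (s : Set ℂ) : Prop :=
  ContDiffOn ℝ 2 f s ∧
    ∀ z ∈ s, iteratedFDeriv ℝ 2 f z ![1, 1] + iteratedFDeriv ℝ 2 f z ![Complex.I, Complex.I] = 0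

open Set Topology Finset InnerProductSpace Laplacian
open scoped Nat

theorem IsLocalMax.deriv_deriv_nonpos {f : ℝ → ℝ} {x₀ : ℝ} (h : IsLocalMax f x₀)
    (hc : ContinuousAt f x₀) : deriv (deriv f) x₀ ≤ 0 := by
  by_contra! hpos
  have hconst : f =ᶠ[𝓝 x₀] fun _ => f x₀ :=
    (h.and (isLocalMin_of_deriv_deriv_pos hpos h.deriv_eq_zero hc)).mono
      fun x hx => le_antisymm hx.1 hx.2
  have : deriv f =ᶠ[𝓝 x₀] fun _ => 0 := by
    filter_upwards [hconst.eventuallyEq_nhds] with x hx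
    rw [hx.deriv_eq, deriv_const]
  rw [this.deriv_eq, deriv_const] at hpos
  exact lt_irrefl _ hpos

theorem IsLocalMax.iteratedFDeriv_two_nonpos {E : Type*} [NormedAddCommGroup E]
    [NormedSpace ℝ E] {ψ : E → ℝ} {z : E} (h : IsLocalMax ψ z) (hψ : ContDiffAt ℝ 2 ψ z)
    (v : E) : iteratedFDeriv ℝ 2 ψ z ![v, v] ≤ 0 := by
  let line : ℝ → E := fun s => z + s • v
  have hline : ∀ s, HasDerivAt line v s := fun s => by
    simpa [line] using ((hasDerivAt_id s).smul_const v).const_add z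
  have hline0 : line 0 = z := by simp [line]
  have hcont : Continuous line := by fun_prop
  rw [← hline0] at h hψ
  have hderiv : deriv (ψ ∘ line) =ᶠ[𝓝 0] fun s => fderiv ℝ ψ (line s) v := by
    filter_upwards [hcont.continuousAt.eventually (hψ.eventually (by simp))] with s hs
    exact ((hs.differentiableAt (by simp)).hasFDerivAt.comp_hasDerivAt s (hline s)).deriv
  have hderiv2 : HasDerivAt (fun s => fderiv ℝ ψ (line s) v) (fderiv ℝ (fderiv ℝ ψ) z v v) 0 := by
    have hdiff : DifferentiableAt ℝ (fderiv ℝ ψ) (line 0) :=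
      (hψ.fderiv_right (m := 1) (by norm_num)).differentiableAt (by norm_num)
    simpa [hline0] using (hdiff.hasFDerivAt.comp_hasDerivAt 0 (hline 0)).clm_apply
      (hasDerivAt_const 0 v)
  have := (h.comp_continuous hcont.continuousAt).deriv_deriv_nonpos
    (hψ.continuousAt.comp hcont.continuousAt)
  rw [hderiv.deriv_eq, hderiv2.deriv] at this
  rwa [iteratedFDeriv_two_apply]

section Harmonic

variable {E : Type*} [NormedAddCommGroup E] [InnerProductSpace ℝ E] [FiniteDimensional ℝ E]

theorem IsLocalMax.laplacian_nonpos {ψ : E → ℝ} {z : E} (h : IsLocalMax ψ z)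
    (hψ : ContDiffAt ℝ 2 ψ z) : Δ ψ z ≤ 0 := by
  rw [laplacian_eq_iteratedFDeriv_stdOrthonormalBasis]
  exact Finset.sum_nonpos fun i _ => h.iteratedFDeriv_two_nonpos hψ _

theorem laplacian_norm_sq (x : E) :
    Δ (fun x : E => ‖x‖ ^ 2) x = 2 * Module.finrank ℝ E := by
  have hsecond (u : E) :
      iteratedFDeriv ℝ 2 (fun x : E => ‖x‖ ^ 2) x ![u, u] = 2 * ‖u‖ ^ 2 := by
    rw [iteratedFDeriv_two_apply, fderiv_norm_sq, ← FunLike.coe_smul, ContinuousLinearMap.fderiv,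
      smul_apply, smul_apply, ← real_inner_self_eq_norm_sq, nsmul_eq_mul, innerSL_apply_apply,
      Nat.cast_ofNat]
    rfl
  simp [laplacian_eq_iteratedFDeriv_stdOrthonormalBasis, hsecond, mul_comm]

theorem InnerProductSpace.HarmonicOnNhd.nonpos_of_forall_mem_frontier_nonpos [Nontrivial E]
    {U : Set E} {w : E → ℝ} (hw : HarmonicOnNhd w U) (hU : Bornology.IsBounded U)
    (hc : ContinuousOn w (closure U)) (hfr : ∀ ζ ∈ frontier U, w ζ ≤ 0) {z₁ : E}
    (hz₁ : z₁ ∈ U) : w z₁ ≤ 0 := by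
  by_contra! hpos
  obtain ⟨R, hR⟩ := hU.closure.subset_closedBall 0
  have hnorm : ∀ x ∈ closure U, ‖x‖ ^ 2 ≤ R ^ 2 := fun x hx =>
    pow_le_pow_left₀ (norm_nonneg x) (mem_closedBall_zero_iff.1 (hR hx)) 2
  -- `ψ = w + ε ‖x‖²` with `ε R² < w z₁` has `Δψ > 0` and no maximum on `frontier U`
  set ε := w z₁ / (R ^ 2 + 1)
  have hε : 0 < ε := by positivity
  have hεR : ε * R ^ 2 < w z₁ := by
    rw [div_mul_eq_mul_div, div_lt_iff₀ (by positivity)]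
    nlinarith
  set ψ : E → ℝ := w + ε • fun x => ‖x‖ ^ 2
  obtain ⟨z₀, hz₀, hmax⟩ := hU.isCompact_closure.exists_isMaxOn ⟨z₁, subset_closure hz₁⟩
    (hc.add (by fun_prop) : ContinuousOn ψ (closure U))
  have hz₀int : z₀ ∈ interior U := by
    by_contra hint
    have h1 : ψ z₁ ≤ ψ z₀ := hmax (subset_closure hz₁)
    have h2 : w z₀ ≤ 0 := hfr z₀ ⟨hz₀, hint⟩
    have h3 := hnorm z₀ hz₀
    simp only [ψ, Pi.add_apply, Pi.smul_apply, smul_eq_mul] at h1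
    nlinarith [sq_nonneg ‖z₁‖]
  have hloc : IsLocalMax ψ z₀ :=
    (hmax.on_subset (interior_subset.trans subset_closure)).isLocalMax
      (isOpen_interior.mem_nhds hz₀int)
  have hharm := hw z₀ (interior_subset hz₀int)
  have hq : ContDiffAt ℝ 2 (fun x : E => ‖x‖ ^ 2) z₀ := (contDiff_norm_sq ℝ).contDiffAt
  have hεq : ContDiffAt ℝ 2 (ε • fun x : E => ‖x‖ ^ 2) z₀ := hq.const_smul ε
  have hlap := hloc.laplacian_nonpos (hharm.1.add hεq)
  rw [hharm.1.laplacian_add hεq, laplacian_smul _ hq, laplacian_norm_sq,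
    hharm.2.self_of_nhds] at hlap
  have : (0 : ℝ) < Module.finrank ℝ E := by exact_mod_cast Module.finrank_pos
  simp only [Pi.zero_apply, smul_eq_mul, zero_add] at hlap
  nlinarith

theorem InnerProductSpace.HarmonicOnNhd.le_of_forall_mem_frontier_le [Nontrivial E]
    {U : Set E} {u v : E → ℝ} (hu : HarmonicOnNhd u U) (hv : HarmonicOnNhd v U)
    (hU : Bornology.IsBounded U) (hcu : ContinuousOn u (closure U))
    (hcv : ContinuousOn v (closure U)) (hle : ∀ ζ ∈ frontier U, u ζ ≤ v ζ) {z : E}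
    (hz : z ∈ U) : u z ≤ v z :=
  sub_nonpos.1 <| (hu.sub hv).nonpos_of_forall_mem_frontier_nonpos hU (hcu.sub hcv)
    (fun ζ hζ => sub_nonpos.2 (hle ζ hζ)) hz

theorem InnerProductSpace.HarmonicOnNhd.finsetSum {F ι : Type*} [NormedAddCommGroup F]
    [NormedSpace ℝ F] {U : Set E} (s : Finset ι) {f : ι → E → F}
    (hf : ∀ i ∈ s, HarmonicOnNhd (f i) U) : HarmonicOnNhd (fun x => ∑ i ∈ s, f i x) U := by
  classical
  induction s using Finset.induction_on with
  | empty => simp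
  | insert i s hi ih =>
    simp only [Finset.sum_insert hi]
    exact (hf i (s.mem_insert_self i)).add (ih fun j hj => hf j (Finset.mem_insert_of_mem hj))

end Harmonic

theorem IsHarmonicOn.harmonicOnNhd {f : ℂ → ℝ} {U : Set ℂ} (hf : IsHarmonicOn f U)
    (hU : IsOpen U) : HarmonicOnNhd f U := fun z hz =>
  ⟨hf.1.contDiffAt (hU.mem_nhds hz), eventually_of_mem (hU.mem_nhds hz) fun x hx => by
    rw [laplacian_eq_iteratedFDeriv_complexPlane]
    exact hf.2 x hx⟩

theorem log_factorial_eq_sum (n : ℕ) :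
    Real.log (n ! : ℝ) = ∑ j ∈ range n, Real.log ((j : ℝ) + 1) := by
  rw [← prod_range_add_one_eq_factorial, Nat.cast_prod, Real.log_prod fun j _ => by positivity]
  push_cast
  rfl

/-- The term `k = k₀` of the sum is `Real.log 0 = 0`. -/
theorem sum_range_log_abs_sub {k₀ m : ℕ} (h : k₀ ≤ m) :
    ∑ k ∈ range (m + 1), Real.log |(k : ℝ) - k₀|
      = Real.log (k₀ ! : ℝ) + Real.log ((m - k₀)! : ℝ) := by
  induction m, h using Nat.le_induction with
  | base =>
    rw [sum_range_succ, log_factorial_eq_sum, ← sum_range_reflect]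
    simp only [sub_self, abs_zero, Real.log_zero, add_zero, Nat.sub_self, Nat.factorial_zero,
      Nat.cast_one, Real.log_one]
    refine sum_congr rfl fun j hj => ?_
    rw [Finset.mem_range] at hj
    rw [abs_sub_comm, abs_of_nonneg (by simp; omega), Nat.cast_sub (by omega),
      Nat.cast_sub (by omega)]
    ring_nf
  | succ m hm ih =>
    rw [sum_range_succ, ih, Nat.succ_sub hm, Nat.factorial_succ, Nat.cast_mul,
      Real.log_mul (by positivity) (by positivity), Nat.cast_add_one, Nat.cast_add_one,
      Nat.cast_sub hm, abs_of_nonneg (by linarith [(Nat.cast_le (α := ℝ)).2 hm])]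
    ring_nf

theorem mul_log_half_sub_one_le_log_factorial_add (a b : ℕ) :
    ((a + b : ℕ) : ℝ) * (Real.log ((a + b : ℕ) / 2) - 1)
      ≤ Real.log (a ! : ℝ) + Real.log (b ! : ℝ) := by
  set n := a + b
  rcases Nat.eq_zero_or_pos n with hn | hn
  · obtain ⟨rfl, rfl⟩ : a = 0 ∧ b = 0 := by omega
    simp
  have hstirling : (n : ℝ) ^ n ≤ Real.exp n * n ! := by
    have := Real.pow_div_factorial_le_exp (n : ℝ) (Nat.cast_nonneg n) n
    rwa [div_le_iff₀ (by positivity)] at this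
  have hchoose : (n ! : ℝ) ≤ 2 ^ n * (a ! * b !) := by
    rw [← Nat.add_choose_mul_factorial_mul_factorial a b, mul_assoc]
    exact_mod_cast Nat.mul_le_mul_right _ (Nat.choose_le_two_pow n b)
  have hprod : ((n : ℝ) / 2) ^ n ≤ Real.exp n * (a ! * b !) := by
    rw [div_pow, div_le_iff₀ (by positivity)]
    calc (n : ℝ) ^ n ≤ Real.exp n * n ! := hstirling
      _ ≤ Real.exp n * (2 ^ n * (a ! * b !)) := by gcongr
      _ = _ := by ring
  have := Real.log_le_log (by positivity) hprod
  rw [Real.log_pow, Real.log_mul (by positivity) (by positivity), Real.log_exp,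
    Real.log_mul (by positivity) (by positivity)] at this
  linarith

/-- If `k₀ h` is the grid point nearest to `x`, then `|x - k h| ≥ |k - k₀| |h| / 2`, so the sum is
at least `log d + log (k₀! (m - k₀)!) + m log (|h| / 2)`. -/
theorem log_add_mul_le_sum_log_max_abs_sub {d h : ℝ} (hd : 0 < d) (hh : h ≠ 0) (m : ℕ)
    (x : ℝ) :
    Real.log d + m * (Real.log (m * |h| / 4) - 1)
      ≤ ∑ k ∈ range (m + 1), Real.log (max d |x - k * h|) := by
  obtain ⟨k₀, hk₀, hmin⟩ := (range (m + 1)).exists_min_image (fun k : ℕ => |x - k * h|)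
    nonempty_range_add_one
  have hk₀m : k₀ ≤ m := Nat.lt_succ_iff.1 (Finset.mem_range.1 hk₀)
  have hfar : ∀ k ∈ range (m + 1), |(k : ℝ) - k₀| * (|h| / 2) ≤ |x - k * h| := fun k hk => by
    have := hmin k hk
    have : |(k : ℝ) - k₀| * |h| ≤ |x - k * h| + |x - k₀ * h| := by
      rw [← abs_mul, show ((k : ℝ) - k₀) * h = (x - k₀ * h) - (x - k * h) by ring]
      exact (abs_sub _ _).trans_eq (add_comm _ _)
    linarith
  have hterm : ∀ k ∈ (range (m + 1)).erase k₀,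
      Real.log |(k : ℝ) - k₀| + Real.log (|h| / 2) ≤ Real.log (max d |x - k * h|) :=
    fun k hk => by
      have hne : (k : ℝ) - k₀ ≠ 0 := sub_ne_zero.2 (Nat.cast_injective.ne (ne_of_mem_erase hk))
      rw [← Real.log_mul (abs_ne_zero.2 hne) (by positivity)]
      exact Real.log_le_log (by positivity)
        ((hfar k (mem_of_mem_erase hk)).trans (le_max_right _ _))
  have hsum : ∑ k ∈ (range (m + 1)).erase k₀, (Real.log |(k : ℝ) - k₀| + Real.log (|h| / 2))
      = Real.log (k₀ ! : ℝ) + Real.log ((m - k₀)! : ℝ) + m * Real.log (|h| / 2) := by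
    rw [sum_add_distrib, sum_erase _ (by simp), sum_range_log_abs_sub hk₀m, sum_const,
      card_erase_of_mem hk₀, card_range, nsmul_eq_mul]
    simp
  have hfact := mul_log_half_sub_one_le_log_factorial_add k₀ (m - k₀)
  rw [Nat.add_sub_cancel' hk₀m] at hfact
  have hlog : (m : ℝ) * (Real.log (m * |h| / 4) - 1)
      = m * (Real.log (m / 2) - 1) + m * Real.log (|h| / 2) := by
    rcases Nat.eq_zero_or_pos m with hm | hm
    · simp [hm]
    rw [show (m : ℝ) * |h| / 4 = m / 2 * (|h| / 2) by ring,
      Real.log_mul (by positivity) (by positivity)]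
    ring
  rw [← add_sum_erase _ _ hk₀]
  have := sum_le_sum hterm
  have := Real.log_le_log hd (le_max_left d |x - k₀ * h|)
  linarith

theorem IsPathConnected.exists_isCompact_isPreconnected_subset_closedBall {X : Type*}
    [PseudoMetricSpace X] {D : Set X} (hD : IsPathConnected D) {c x y : X} (hx : x ∈ D)
    (hy : y ∈ D) {r : ℝ} (hxr : dist x c < r) (hyr : r ≤ dist y c) :
    ∃ K ⊆ D ∩ closedBall c r, IsCompact K ∧ IsPreconnected K ∧ x ∈ K ∧
      ∃ e ∈ K, dist e c = r := by
  obtain ⟨γ, hγ⟩ := hD.joinedIn x hx y hy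
  set f : ℝ → X := ⇑γ.extend
  have hf : Continuous f := γ.continuous_extend
  have hf0 : f 0 = x := γ.extend_zero
  set S := Icc (0 : ℝ) 1 ∩ {t | r ≤ dist (f t) c}
  have hS : IsCompact S :=
    isCompact_Icc.inter_right (isClosed_le continuous_const (hf.dist continuous_const))
  obtain ⟨T, ⟨hT01, hTr⟩, hTmin⟩ := hS.exists_isLeast ⟨1, ⟨by simp, by simpa [f] using hyr⟩⟩
  have hT0 : 0 < T := hT01.1.lt_of_ne fun h => by
    have : r ≤ dist (f 0) c := h ▸ hTr
    rw [hf0] at this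
    linarith
  have hbelow : ∀ t ∈ Ico 0 T, dist (f t) c ≤ r := fun t ht => by
    by_contra! h
    exact (hTmin ⟨⟨ht.1, ht.2.le.trans hT01.2⟩, h.le⟩).not_gt ht.2
  have hball : ∀ t ∈ Icc 0 T, dist (f t) c ≤ r := by
    rw [← closure_Ico hT0.ne]
    exact closure_minimal hbelow (isClosed_le (hf.dist continuous_const) continuous_const)
  refine ⟨f '' Icc 0 T, ?_, isCompact_Icc.image hf, isPreconnected_Icc.image f hf.continuousOn,
    ⟨0, ⟨le_rfl, hT0.le⟩, hf0⟩, f T, ⟨T, ⟨hT0.le, le_rfl⟩, rfl⟩,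
    le_antisymm (hball T ⟨hT0.le, le_rfl⟩) hTr⟩
  rintro _ ⟨t, ht, rfl⟩
  refine ⟨?_, hball t ht⟩
  simp only [f, γ.extend_apply ⟨ht.1, ht.2.trans hT01.2⟩]
  exact hγ _

theorem IsPreconnected.exists_equally_spaced_values {X : Type*} [TopologicalSpace X]
    {K : Set X} (hK : IsPreconnected K) {f : X → ℝ} (hf : ContinuousOn f K) {z e : X}
    (hz : z ∈ K) (he : e ∈ K) (hze : f z ≤ f e) (m : ℕ) :
    ∃ a : ℕ → X, (∀ k, a k ∈ K) ∧ ∀ k ≤ m, f (a k) = f z + k * ((f e - f z) / m) := by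
  have hpts : ∀ k : ℕ, ∃ a ∈ K, k ≤ m → f a = f z + k * ((f e - f z) / m) := fun k => by
    by_cases hk : k ≤ m
    · have hstep : k * ((f e - f z) / m) ≤ f e - f z := by
        rw [mul_div_left_comm]
        exact mul_le_of_le_one_right (by linarith)
          (div_le_one_of_le₀ (by exact_mod_cast hk) m.cast_nonneg)
      obtain ⟨a, ha, hfa⟩ := hK.intermediate_value hz he hf
        ⟨le_add_of_nonneg_right
          (mul_nonneg k.cast_nonneg (div_nonneg (sub_nonneg.2 hze) m.cast_nonneg)), by linarith⟩
      exact ⟨a, ha, fun _ => hfa⟩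
    · exact ⟨z, hz, fun h => absurd h hk⟩
  choose a haK hfa using hpts
  exact ⟨a, haK, hfa⟩

theorem dist_le_three_mul_dist_of_two_mul_le {X : Type*} [PseudoMetricSpace X] {a c p ζ : X}
    {r : ℝ} (ha : dist a c ≤ r) (hp : dist p c ≤ r) (hζ : 2 * r ≤ dist ζ c) :
    dist ζ p ≤ 3 * dist ζ a := by
  linarith [dist_triangle ζ c p, dist_triangle ζ a c, dist_comm p c]

section NormedSpace

variable {E : Type*} [NormedAddCommGroup E] [NormedSpace ℝ E]

theorem log_add_mul_le_sum_log_norm_sub {l : StrongDual ℝ E} (hl : ‖l‖ ≤ 1) {a : ℕ → E}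
    {m : ℕ} {x₀ h d : ℝ} (hd : 0 < d) (hh : h ≠ 0) (hgrid : ∀ k ≤ m, l (a k) = x₀ + k * h)
    {ζ : E} (hζ : ∀ k, d ≤ ‖ζ - a k‖) :
    Real.log d + m * (Real.log (m * |h| / 4) - 1)
      ≤ ∑ k ∈ range (m + 1), Real.log ‖ζ - a k‖ := by
  refine (log_add_mul_le_sum_log_max_abs_sub hd hh m (l ζ - x₀)).trans
    (sum_le_sum fun k hk => Real.log_le_log (hd.trans_le (le_max_left _ _)) (max_le (hζ k) ?_))
  calc |l ζ - x₀ - k * h| = |l (ζ - a k)| := by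
        rw [map_sub, hgrid k (Nat.lt_succ_iff.1 (Finset.mem_range.1 hk))]; ring_nf
    _ ≤ ‖l‖ * ‖ζ - a k‖ := l.le_opNorm _
    _ ≤ ‖ζ - a k‖ := mul_le_of_le_one_left (norm_nonneg _) hl

theorem mul_log_norm_sub_le_sum_log_norm_sub {l : StrongDual ℝ E} (hl : ‖l‖ ≤ 1) {a : ℕ → E}
    {m : ℕ} {x₀ h d r : ℝ} {p₀ p ζ : E} (hr : r ≤ 1) (hd : 0 < d) (hdm : -Real.log d ≤ m)
    (hh : r / 2 ≤ m * |h|) (hgrid : ∀ k ≤ m, l (a k) = x₀ + k * h)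
    (ha : ∀ k, dist (a k) p₀ ≤ r) (hζa : ∀ k, d ≤ ‖ζ - a k‖) (hp : dist p p₀ ≤ r)
    (hζp : ζ ≠ p) :
    (m + 1) * Real.log ‖ζ - p‖
      ≤ (m + 1) * (2 + Real.log 24) + ∑ k ∈ range (m + 1), Real.log ‖ζ - a k‖ := by
  have hζp' : 0 < ‖ζ - p‖ := norm_pos_iff.2 (sub_ne_zero.2 hζp)
  have hm : (0 : ℝ) ≤ m := m.cast_nonneg
  rcases le_or_gt (2 * r) (dist ζ p₀) with hfar | hnear
  · have hlog3 : Real.log 3 ≤ 2 + Real.log 24 := by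
      linarith [Real.log_le_log (by norm_num) (by norm_num : (3 : ℝ) ≤ 24)]
    calc (m + 1) * Real.log ‖ζ - p‖ = ∑ k ∈ range (m + 1), Real.log ‖ζ - p‖ := by simp
      _ ≤ ∑ k ∈ range (m + 1), (Real.log 3 + Real.log ‖ζ - a k‖) := sum_le_sum fun k _ => by
          rw [← Real.log_mul (by norm_num) (hd.trans_le (hζa k)).ne']
          refine Real.log_le_log hζp' ?_
          simpa [dist_eq_norm] using dist_le_three_mul_dist_of_two_mul_le (ha k) hp hfar
      _ = (m + 1) * Real.log 3 + ∑ k ∈ range (m + 1), Real.log ‖ζ - a k‖ := by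
          simp [sum_add_distrib]
      _ ≤ _ := by gcongr
  · have hr0 : 0 < r := by linarith [dist_nonneg (x := ζ) (y := p₀)]
    have hh0 : h ≠ 0 := by
      rintro rfl
      simp at hh
      linarith
    have hsum := log_add_mul_le_sum_log_norm_sub hl hd hh0 hgrid hζa
    have hL : Real.log (r / 8) ≤ Real.log (m * |h| / 4) :=
      Real.log_le_log (by positivity) (by linarith)
    have hL0 : Real.log (r / 8) ≤ 0 := Real.log_nonpos (by positivity) (by linarith)
    have hζp3 : Real.log ‖ζ - p‖ ≤ Real.log (r / 8) + Real.log 24 := by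
      rw [← Real.log_mul (by positivity) (by norm_num)]
      refine Real.log_le_log hζp' ?_
      rw [← dist_eq_norm]
      linarith [dist_triangle ζ p₀ p, dist_comm p p₀]
    nlinarith [mul_le_mul_of_nonneg_left hL hm,
      mul_le_mul_of_nonneg_left hζp3 (by linarith : (0 : ℝ) ≤ m + 1)]

theorem exists_log_potential_majorant {D : Set E} (hD : IsOpen D) (hDc : IsPathConnected D)
    {p₀ w : E} (hp₀ : p₀ ∈ closure D) (hw : w ∈ D) {r : ℝ} (hr : 0 < r) (hr1 : r ≤ 1)
    (hrw : r ≤ dist w p₀) :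
    ∃ (m : ℕ) (a : ℕ → E), (∀ k, a k ∈ D ∧ dist (a k) p₀ ≤ r) ∧
      ∀ p ∈ D, dist p p₀ ≤ r → ∀ ζ ∉ D, (m + 1) * Real.log ‖ζ - p‖
        ≤ (m + 1) * (2 + Real.log 24) + ∑ k ∈ range (m + 1), Real.log ‖ζ - a k‖ := by
  obtain ⟨z, hz, hzp₀⟩ : ∃ z ∈ D, dist z p₀ < r / 2 := by
    obtain ⟨z, hz, hd⟩ := mem_closure_iff.1 hp₀ (r / 2) (by positivity)
    exact ⟨z, hz, by rwa [dist_comm]⟩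
  obtain ⟨K, hKsub, hKc, hKconn, hzK, e, heK, he⟩ :=
    hDc.exists_isCompact_isPreconnected_subset_closedBall hz hw (by linarith) hrw
  have hez : r / 2 ≤ ‖e - z‖ := by linarith [dist_triangle e z p₀, dist_eq_norm e z]
  obtain ⟨l, hl, hle⟩ := exists_dual_vector ℝ (e - z) (by linarith : (0 : ℝ) < ‖e - z‖).ne'
  simp only [map_sub, RCLike.ofReal_real_eq_id, id] at hle
  obtain ⟨d, hd, hdK⟩ := hKc.exists_cthickening_subset_open hD (hKsub.trans inter_subset_left)
  have hdist : ∀ a ∈ K, ∀ ζ ∉ D, d ≤ ‖ζ - a‖ := fun a ha ζ hζ => by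
    by_contra! h
    exact hζ (hdK (mem_cthickening_of_dist_le ζ a d K ha (by rw [dist_eq_norm]; exact h.le)))
  set m := ⌈-Real.log d⌉₊ + 1
  have hdm : -Real.log d ≤ m := by
    have := Nat.le_ceil (-Real.log d)
    simp only [m, Nat.cast_add, Nat.cast_one]
    linarith
  obtain ⟨a, haK, hal⟩ := hKconn.exists_equally_spaced_values l.continuous.continuousOn hzK heK
    (by linarith) m
  refine ⟨m, a, fun k => hKsub (haK k), fun p hp hpp₀ ζ hζ => ?_⟩
  refine mul_log_norm_sub_le_sum_log_norm_sub hl.le hr1 hd hdm ?_ hal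
    (fun k => (hKsub (haK k)).2) (fun k => hdist _ (haK k) ζ hζ) hpp₀
    (ne_of_mem_of_not_mem hp hζ).symm
  rw [abs_of_nonneg (by rw [hle]; positivity), mul_div_cancel₀ _ (by simp [m]; positivity), hle]
  exact hez

end NormedSpace

section GreenFunction

variable {E : Type*} [NormedAddCommGroup E] [InnerProductSpace ℝ E] [FiniteDimensional ℝ E]
  [Nontrivial E] {D : Set E} {H : E → E → ℝ}

theorem mul_le_add_sum_of_forall_mem_frontier (hD : Bornology.IsBounded D)
    (hharm : ∀ q ∈ D, HarmonicOnNhd (fun z => H z q) D)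
    (hcont : ∀ q ∈ D, ContinuousOn (fun z => H z q) (closure D))
    (hbv : ∀ q ∈ D, ∀ z ∈ frontier D, H z q = Real.log ‖z - q‖) {p : E} (hp : p ∈ D)
    {a : ℕ → E} (ha : ∀ k, a k ∈ D) {c C : ℝ} (s : Finset ℕ)
    (hle : ∀ ζ ∈ frontier D, c * Real.log ‖ζ - p‖ ≤ C + ∑ k ∈ s, Real.log ‖ζ - a k‖) :
    c * H p p ≤ C + ∑ k ∈ s, H p (a k) := by
  refine HarmonicOnNhd.le_of_forall_mem_frontier_le (u := fun z => c * H z p)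
    (v := fun z => C + ∑ k ∈ s, H z (a k)) ((hharm p hp).const_smul (c := c))
    ((harmonicOnNhd_const C).add (HarmonicOnNhd.finsetSum s fun k _ => hharm _ (ha k))) hD
    (continuousOn_const.mul (hcont p hp))
    (continuousOn_const.add (continuousOn_finsetSum s fun k _ => hcont _ (ha k)))
    (fun ζ hζ => ?_) hp
  simp only [hbv p hp ζ hζ, fun k => hbv (a k) (ha k) ζ hζ]
  exact hle ζ hζ

theorem eventually_lt_three_add_log_add_log (hD : IsOpen D) (hDc : IsConnected D)
    (hDb : Bornology.IsBounded D) (hharm : ∀ q ∈ D, HarmonicOnNhd (fun z => H z q) D)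
    (hcont : ∀ q ∈ D, ContinuousOn (fun z => H z q) (closure D))
    (hbv : ∀ q ∈ D, ∀ z ∈ frontier D, H z q = Real.log ‖z - q‖) {p₀ w : E}
    (hp₀ : p₀ ∈ frontier D) (hw : w ∈ D) {r : ℝ} (hr : 0 < r) (hr1 : r ≤ 1)
    (hrw : r ≤ dist w p₀) :
    ∀ᶠ p in 𝓝[D] p₀, H p p < 3 + Real.log 24 + Real.log r := by
  have hfr : ∀ ζ ∈ frontier D, ζ ∉ D := fun ζ hζ => (hD.frontier_eq ▸ hζ).2
  obtain ⟨m, a, ha, hmaj⟩ := exists_log_potential_majorant hD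
    (hD.isConnected_iff_isPathConnected.1 hDc) (frontier_subset_closure hp₀) hw hr hr1 hrw
  have hm : (0 : ℝ) < m + 1 := by positivity
  have hlim : Tendsto (fun p => ∑ k ∈ range (m + 1), H p (a k)) (𝓝[D] p₀)
      (𝓝 (∑ k ∈ range (m + 1), Real.log ‖p₀ - a k‖)) := tendsto_finsetSum _ fun k _ => by
    have := ((hcont _ (ha k).1) p₀ (frontier_subset_closure hp₀)).tendsto.mono_left
      (nhdsWithin_mono _ subset_closure)
    rwa [hbv _ (ha k).1 p₀ hp₀] at this
  have hlim_lt : ∑ k ∈ range (m + 1), Real.log ‖p₀ - a k‖ < (m + 1) * (Real.log r + 1) :=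
    calc ∑ k ∈ range (m + 1), Real.log ‖p₀ - a k‖ ≤ ∑ k ∈ range (m + 1), Real.log r :=
          sum_le_sum fun k _ => Real.log_le_log
            (norm_pos_iff.2 (sub_ne_zero.2 (ne_of_mem_of_not_mem (ha k).1 (hfr p₀ hp₀)).symm))
            (by rw [← dist_eq_norm, dist_comm]; exact (ha k).2)
      _ < (m + 1) * (Real.log r + 1) := by simp; linarith
  filter_upwards [hlim.eventually (gt_mem_nhds hlim_lt), self_mem_nhdsWithin,
    mem_nhdsWithin_of_mem_nhds (closedBall_mem_nhds p₀ hr)] with p hlt hp hpr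
  have := mul_le_add_sum_of_forall_mem_frontier hDb hharm hcont hbv hp (fun k => (ha k).1) _
    fun ζ hζ => hmaj p hp hpr ζ (hfr ζ hζ)
  by_contra! hge
  nlinarith [mul_le_mul_of_nonneg_left hge hm.le]

end GreenFunction

theorem robin_function_boundary_limit_general (D : Set ℂ) (hD : IsOpen D)
    (hDconn : IsConnected D) (hDbdd : Bornology.IsBounded D)
    (H : ℂ → ℂ → ℝ)
    (hharm : ∀ p ∈ D, IsHarmonicOn (fun z => H z p) D)
    (hcont : ∀ p ∈ D, ContinuousOn (fun z => H z p) (closure D))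
    (hbv : ∀ p ∈ D, ∀ z ∈ frontier D, H z p = Real.log ‖z - p‖)
    (p₀ : ℂ) (hp₀ : p₀ ∈ frontier D) :
    Tendsto (fun p => H p p) (nhdsWithin p₀ D) atBot ∧
    Tendsto (fun p => Real.exp (-(H p p))) (nhdsWithin p₀ D) atTop := by
  have hbot : Tendsto (fun p => H p p) (𝓝[D] p₀) atBot := by
    refine tendsto_atBot.2 fun M => ?_
    obtain ⟨w, hw⟩ := hDconn.nonempty
    have hwp₀ : 0 < dist w p₀ := dist_pos.2 fun h => (hD.frontier_eq ▸ hp₀).2 (h ▸ hw)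
    set r := min (min 1 (dist w p₀)) (Real.exp (M - 3 - Real.log 24))
    have hr : 0 < r := lt_min (lt_min one_pos hwp₀) (Real.exp_pos _)
    have hrM : Real.log r ≤ M - 3 - Real.log 24 :=
      (Real.log_le_log hr (min_le_right _ _)).trans_eq (Real.log_exp _)
    filter_upwards [eventually_lt_three_add_log_add_log hD hDconn hDbdd
      (fun p hp => (hharm p hp).harmonicOnNhd hD) hcont hbv hp₀ hw hr
      ((min_le_left _ _).trans (min_le_left _ _)) ((min_le_left _ _).trans (min_le_right _ _))]
      with p hp
    linarith
  exact ⟨hbot, Real.tendsto_exp_atTop.comp (tendsto_neg_atBot_atTop.comp hbot)⟩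

/-- For a bounded regular domain the Robin function `Λ_D(p) = H(p,p)` tends to `-∞`
at the boundary, equivalently the capacity density `c_D(p) = e^{-Λ_D(p)}` tends to `+∞`. -/
theorem robin_function_boundary_limit (D : Set ℂ) (hD : IsOpen D)
    (hDne : D.Nonempty) (hDconn : IsConnected D) (hDbdd : Bornology.IsBounded D)
    (H : ℂ → ℂ → ℝ)
    (hharm : ∀ p ∈ D, IsHarmonicOn (fun z => H z p) D)
    (hcont : ∀ p ∈ D, ContinuousOn (fun z => H z p) (closure D))
    (hbv : ∀ p ∈ D, ∀ z ∈ frontier D, H z p = Real.log ‖z - p‖)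
    (p₀ : ℂ) (hp₀ : p₀ ∈ frontier D) :
    Tendsto (fun p => H p p) (nhdsWithin p₀ D) atBot ∧
    Tendsto (fun p => Real.exp (-(H p p))) (nhdsWithin p₀ D) atTop :=
  robin_function_boundary_limit_general D hD hDconn hDbdd H hharm hcont hbv p₀ hp₀
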